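/- The breakpoint distance between two permutations of {1,...,n} is zero if and only if the two permutations are equal or one is the reverse of the other. -/

import Mathlib

/-!
An adjacency set of size `n - 1` contained in another one of the same size equals it, so
`dBP p q = 0` means `adjSet p = adjSet q`. The first entry of `p` lies on only one adjacency, so
it is an endpoint of `q` too, and reversing `q` if needed both sequences start with it. From a
common first entry the adjacency set rebuilds the sequence one step at a time: the next entry is
the other end of the unique adjacency through the current one.
-/

/-- `l` is a permutation of `{1,…,n}` viewed as a sequence. -/
def IsPermSeq (n : ℕ) (l : List ℕ) : Prop :=
  l.Nodup ∧ l.toFinset = Finset.Icc 1 n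

/-- The set of unordered adjacencies `{l[i], l[i+1]}` of a sequence `l`. -/
def adjSet (l : List ℕ) : Finset (Sym2 ℕ) :=
  ((l.zip l.tail).map fun p => Sym2.mk p.1 p.2).toFinset

/-- Breakpoint distance: `|Adj(p) \ Adj(q)|`. -/
def dBP (p q : List ℕ) : ℕ := (adjSet p \ adjSet q).card

@[simp]
lemma adjSet_nil : adjSet [] = ∅ := rfl

@[simp]
lemma adjSet_singleton (a : ℕ) : adjSet [a] = ∅ := rfl

@[simp]
lemma adjSet_cons_cons (a b : ℕ) (t : List ℕ) :
    adjSet (a :: b :: t) = insert s(a, b) (adjSet (b :: t)) := by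
  simp [adjSet]

lemma mem_adjSet {l : List ℕ} {e : Sym2 ℕ} :
    e ∈ adjSet l ↔ ∃ x y, [x, y] <:+: l ∧ e = s(x, y) := by
  induction l with
  | nil => simp
  | cons a t ih =>
    rcases t with _ | ⟨b, t⟩
    · simp only [adjSet_singleton, Finset.notMem_empty, false_iff, not_exists, not_and]
      exact fun x y h => absurd h.length_le (by simp)
    · simp [ih, List.infix_cons_iff, or_and_right, exists_or]

lemma mem_of_mem_adjSet {l : List ℕ} {e : Sym2 ℕ} (he : e ∈ adjSet l) {x : ℕ} (hx : x ∈ e) :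
    x ∈ l := by
  obtain ⟨y, z, hyz, rfl⟩ := mem_adjSet.mp he
  exact hyz.subset (by simpa using hx)

lemma adjSet_reverse (l : List ℕ) : adjSet l.reverse = adjSet l := by
  have hsub : ∀ l : List ℕ, adjSet l.reverse ⊆ adjSet l := fun l e he => by
    obtain ⟨x, y, h, rfl⟩ := mem_adjSet.mp he
    exact mem_adjSet.mpr ⟨y, x, by simpa using List.reverse_infix.mpr h, Sym2.eq_swap⟩
  exact (hsub l).antisymm (by simpa using hsub l.reverse)

lemma card_adjSet {l : List ℕ} (hl : l.Nodup) : (adjSet l).card = l.length - 1 := by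
  induction l with
  | nil => rfl
  | cons a t ih =>
    rcases t with _ | ⟨b, t⟩
    · rfl
    · have hab : s(a, b) ∉ adjSet (b :: t) := fun h =>
        (List.nodup_cons.mp hl).1 (mem_of_mem_adjSet h (Sym2.mem_mk_left a b))
      rw [adjSet_cons_cons, Finset.card_insert_of_notMem hab, ih (List.nodup_cons.mp hl).2]
      simp

lemma erase_adjSet_cons_cons {a b : ℕ} {t : List ℕ} (hl : (a :: b :: t).Nodup) :
    (adjSet (a :: b :: t)).erase s(a, b) = adjSet (b :: t) := by
  rw [adjSet_cons_cons, Finset.erase_insert fun h => (List.nodup_cons.mp hl).1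
    (mem_of_mem_adjSet h (Sym2.mem_mk_left a b))]

lemma eq_of_mem_adjSet_of_head_mem {a b : ℕ} {t : List ℕ} (hl : (a :: b :: t).Nodup)
    {e : Sym2 ℕ} (he : e ∈ adjSet (a :: b :: t)) (ha : a ∈ e) : e = s(a, b) := by
  rw [adjSet_cons_cons, Finset.mem_insert] at he
  exact he.resolve_right fun h => (List.nodup_cons.mp hl).1 (mem_of_mem_adjSet h ha)

lemma subsingleton_adjSet_at_head {a : ℕ} {t : List ℕ} (hl : (a :: t).Nodup) :
    {e | e ∈ adjSet (a :: t) ∧ a ∈ e}.Subsingleton := by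
  rcases t with _ | ⟨b, t⟩
  · simp
  · rintro e ⟨he, hae⟩ e' ⟨he', hae'⟩
    rw [eq_of_mem_adjSet_of_head_mem hl he hae, eq_of_mem_adjSet_of_head_mem hl he' hae']

lemma head?_eq_or_getLast?_eq_of_subsingleton {l : List ℕ} (hl : l.Nodup) {a : ℕ} (ha : a ∈ l)
    (h : {e | e ∈ adjSet l ∧ a ∈ e}.Subsingleton) : l.head? = some a ∨ l.getLast? = some a := by
  obtain ⟨s, r, rfl⟩ := List.append_of_mem ha
  rcases s.eq_nil_or_concat' with rfl | ⟨s, x, rfl⟩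
  · simp
  rcases r with _ | ⟨y, r⟩
  · simp
  have hxa : [x, a] <:+: s ++ [x] ++ a :: y :: r := ⟨s, y :: r, by simp⟩
  have hay : [a, y] <:+: s ++ [x] ++ a :: y :: r := ⟨s ++ [x], r, by simp⟩
  have hedge := h ⟨mem_adjSet.mpr ⟨x, a, hxa, rfl⟩, Sym2.mem_mk_right x a⟩
    ⟨mem_adjSet.mpr ⟨a, y, hay, rfl⟩, Sym2.mem_mk_left a y⟩
  have hx : x ≠ a ∧ x ≠ y := by
    simp only [List.append_assoc, List.singleton_append, List.nodup_append, List.nodup_cons,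
      List.mem_cons] at hl
    tauto
  rcases Sym2.eq_iff.mp hedge with ⟨h, -⟩ | ⟨h, -⟩
  · exact absurd h hx.1
  · exact absurd h hx.2

lemma eq_of_adjSet_eq_of_head?_eq {p q : List ℕ} (hp : p.Nodup) (hq : q.Nodup)
    (hhead : p.head? = q.head?) (hadj : adjSet p = adjSet q) : p = q := by
  induction p generalizing q with
  | nil => exact (List.head?_eq_none_iff.mp hhead.symm).symm
  | cons a t ih =>
    obtain ⟨r, rfl⟩ : ∃ r, q = a :: r := by
      rcases q with _ | ⟨c, r⟩
      · simp at hhead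
      · exact ⟨r, by simpa using hhead.symm⟩
    rcases t with _ | ⟨b, t⟩ <;> rcases r with _ | ⟨d, r⟩
    · rfl
    · exact absurd hadj.symm (by simp)
    · simp at hadj
    have hbd : b = d := by
      have hab : s(a, b) ∈ adjSet (a :: d :: r) := hadj ▸ by simp
      exact Sym2.congr_right.mp (eq_of_mem_adjSet_of_head_mem hq hab (Sym2.mem_mk_left a b))
    subst hbd
    have htail : adjSet (b :: t) = adjSet (b :: r) := by
      rw [← erase_adjSet_cons_cons hp, ← erase_adjSet_cons_cons hq, hadj]
    rw [ih hp.of_cons hq.of_cons rfl htail]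

theorem eq_or_eq_reverse_of_adjSet_eq {p q : List ℕ} (hp : p.Nodup) (hq : q.Nodup)
    (hpq : p.toFinset = q.toFinset) (hadj : adjSet p = adjSet q) : p = q ∨ p = q.reverse := by
  rcases p with _ | ⟨a, t⟩
  · exact Or.inl (List.toFinset_eq_empty_iff _ |>.mp hpq.symm).symm
  have haq : a ∈ q := List.mem_toFinset.mp (hpq ▸ by simp)
  have hend : {e | e ∈ adjSet q ∧ a ∈ e}.Subsingleton := hadj ▸ subsingleton_adjSet_at_head hp
  rcases head?_eq_or_getLast?_eq_of_subsingleton hq haq hend with h | h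
  · exact Or.inl (eq_of_adjSet_eq_of_head?_eq hp hq (by simp [h]) hadj)
  · refine Or.inr (eq_of_adjSet_eq_of_head?_eq hp (List.nodup_reverse.mpr hq) ?_ ?_)
    · simp [h]
    · rw [adjSet_reverse, hadj]

theorem dBP_eq_zero_iff_general (n : ℕ) (p q : List ℕ)
    (hp : IsPermSeq n p) (hq : IsPermSeq n q) :
    dBP p q = 0 ↔ p = q ∨ p = q.reverse := by
  have hpq : p.toFinset = q.toFinset := hp.2.trans hq.2.symm
  constructor
  · intro h
    have hsub : adjSet p ⊆ adjSet q := by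
      rwa [dBP, Finset.card_eq_zero, Finset.sdiff_eq_empty_iff_subset] at h
    have hlen : p.length = q.length :=
      (List.perm_of_nodup_nodup_toFinset_eq hp.1 hq.1 hpq).length_eq
    refine eq_or_eq_reverse_of_adjSet_eq hp.1 hq.1 hpq (Finset.eq_of_subset_of_card_le hsub ?_)
    rw [card_adjSet hp.1, card_adjSet hq.1, hlen]
  · rintro (rfl | rfl) <;> simp [dBP, adjSet_reverse]

/-- The breakpoint distance between two permutations of `{1,…,n}` (`n ≥ 2`) is zero
iff the permutations are equal or one is the reverse of the other. -/
theorem dBP_eq_zero_iff (n : ℕ) (hn : 2 ≤ n) (p q : List ℕ)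
    (hp : IsPermSeq n p) (hq : IsPermSeq n q) :
    dBP p q = 0 ↔ p = q ∨ p = q.reverse :=
  dBP_eq_zero_iff_general n p q hp hq
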